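/- Given a grid ((ξ,X),(η,Y)) on a double vector bundle (D; A, B; M), the warp warp(ξ,η), defined pointwise by ξ(Y(m)) -_A η(X(m)) = warp(ξ,η)(m) +_B 0̃_{X(m)}, is a smooth section of the core bundle C → M, and it changes sign when ξ and η are interchanged: warp(η,ξ) = -warp(ξ,η). -/

import Mathlib

/-! Algebraic model of (double) vector bundles.

A `PreVB E B` is a vector bundle structure on `E` over the base `B`, recorded
through its structure maps (projection, fibrewise addition, scalar
multiplication by reals, zero section and fibrewise negation) together with
the usual axioms, all stated for elements lying in a common fibre. -/

structure PreVB (E : Type*) (B : Type*) where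
  π : E → B
  add : E → E → E
  smul : ℝ → E → E
  neg : E → E
  zero : B → E
  π_zero : ∀ b, π (zero b) = b
  π_add : ∀ e e', π e = π e' → π (add e e') = π e
  π_smul : ∀ t e, π (smul t e) = π e
  π_neg : ∀ e, π (neg e) = π e
  add_zero : ∀ e, add e (zero (π e)) = e
  zero_add : ∀ e, add (zero (π e)) e = e
  add_comm : ∀ e e', π e = π e' → add e e' = add e' e
  add_assoc : ∀ e₁ e₂ e₃, π e₁ = π e₂ → π e₂ = π e₃ →
    add (add e₁ e₂) e₃ = add e₁ (add e₂ e₃)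
  add_neg : ∀ e, add e (neg e) = zero (π e)
  one_smul : ∀ e, smul 1 e = e
  smul_zero : ∀ t b, smul t (zero b) = zero b
  smul_add : ∀ t e e', π e = π e' → smul t (add e e') = add (smul t e) (smul t e')
  add_smul : ∀ t s e, smul (t + s) e = add (smul t e) (smul s e)
  mul_smul : ∀ t s e, smul (t * s) e = smul t (smul s e)

/-- Fibrewise subtraction. -/
def PreVB.sub {E B : Type*} (V : PreVB E B) (e e' : E) : E := V.add e (V.neg e')

/-- An (algebraic model of a) double vector bundle `(D; A, B; M)`:
two vector bundle structures on `D`, over the vector bundles `A → M` and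
`B → M`, which commute in the categorical sense: each structure map of either
structure on `D` is a morphism of vector bundles with respect to the other
structure.  The field `core_exists` records that the core acts freely and
transitively on the fibres of `D → A ×_M B` (it follows, for genuine double
vector bundles, from `D → A ×_M B` being a surjective submersion). -/
structure DVB (D : Type*) (A : Type*) (B : Type*) (M : Type*) where
  bA : PreVB A M
  bB : PreVB B M
  vA : PreVB D A
  vB : PreVB D B
  proj_compat : ∀ d, bA.π (vA.π d) = bB.π (vB.π d)
  πB_addA : ∀ d d', vA.π d = vA.π d' → vB.π (vA.add d d') = bB.add (vB.π d) (vB.π d')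
  πA_addB : ∀ d d', vB.π d = vB.π d' → vA.π (vB.add d d') = bA.add (vA.π d) (vA.π d')
  πB_smulA : ∀ t d, vB.π (vA.smul t d) = bB.smul t (vB.π d)
  πA_smulB : ∀ t d, vA.π (vB.smul t d) = bA.smul t (vA.π d)
  πB_negA : ∀ d, vB.π (vA.neg d) = bB.neg (vB.π d)
  πA_negB : ∀ d, vA.π (vB.neg d) = bA.neg (vA.π d)
  πB_zeroA : ∀ a, vB.π (vA.zero a) = bB.zero (bA.π a)
  πA_zeroB : ∀ b, vA.π (vB.zero b) = bA.zero (bB.π b)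
  zeroA_add : ∀ a a', bA.π a = bA.π a' →
    vA.zero (bA.add a a') = vB.add (vA.zero a) (vA.zero a')
  zeroB_add : ∀ b b', bB.π b = bB.π b' →
    vB.zero (bB.add b b') = vA.add (vB.zero b) (vB.zero b')
  zeroA_smul : ∀ t a, vA.zero (bA.smul t a) = vB.smul t (vA.zero a)
  zeroB_smul : ∀ t b, vB.zero (bB.smul t b) = vA.smul t (vB.zero b)
  double_zero : ∀ m, vA.zero (bA.zero m) = vB.zero (bB.zero m)
  interchange : ∀ d₁ d₂ d₃ d₄,
    vA.π d₁ = vA.π d₂ → vA.π d₃ = vA.π d₄ →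
    vB.π d₁ = vB.π d₃ → vB.π d₂ = vB.π d₄ →
    vB.add (vA.add d₁ d₂) (vA.add d₃ d₄) = vA.add (vB.add d₁ d₃) (vB.add d₂ d₄)
  smulA_addB : ∀ t d d', vB.π d = vB.π d' →
    vA.smul t (vB.add d d') = vB.add (vA.smul t d) (vA.smul t d')
  smulB_addA : ∀ t d d', vA.π d = vA.π d' →
    vB.smul t (vA.add d d') = vA.add (vB.smul t d) (vB.smul t d')
  smul_smul : ∀ t s d, vA.smul t (vB.smul s d) = vB.smul s (vA.smul t d)
  core_exists : ∀ d d', vA.π d = vA.π d' → vB.π d = vB.π d' →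
    ∃! c : D, (vA.π c = bA.zero (bA.π (vA.π d)) ∧ vB.π c = bB.zero (bA.π (vA.π d))) ∧
      d = vA.add d' (vB.add c (vA.zero (vA.π d)))

/-- `d` is an element of the core of the double vector bundle, sitting over `m ∈ M`. -/
def DVB.CoreAt {D A B M : Type*} (V : DVB D A B M) (m : M) (d : D) : Prop :=
  V.vA.π d = V.bA.zero m ∧ V.vB.π d = V.bB.zero m

/-- A linear section `(ξ, X)` of the double vector bundle: `ξ : B → D` is a
section of `D → B` which is a morphism of vector bundles over `X : M → A`. -/
structure LinSecB {D A B M : Type*} (V : DVB D A B M) where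
  ξ : B → D
  X : M → A
  secX : ∀ m, V.bA.π (X m) = m
  proj : ∀ b, V.vB.π (ξ b) = b
  over_base : ∀ b, V.vA.π (ξ b) = X (V.bB.π b)
  map_add : ∀ b b', V.bB.π b = V.bB.π b' →
    ξ (V.bB.add b b') = V.vA.add (ξ b) (ξ b')
  map_smul : ∀ t b, ξ (V.bB.smul t b) = V.vA.smul t (ξ b)

/-- A linear section `(η, Y)` of the other structure: `η : A → D` is a section
of `D → A` which is a morphism of vector bundles over `Y : M → B`. -/
structure LinSecA {D A B M : Type*} (V : DVB D A B M) where
  η : A → D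
  Y : M → B
  secY : ∀ m, V.bB.π (Y m) = m
  proj : ∀ a, V.vA.π (η a) = a
  over_base : ∀ a, V.vB.π (η a) = Y (V.bA.π a)
  map_add : ∀ a a', V.bA.π a = V.bA.π a' →
    η (V.bA.add a a') = V.vB.add (η a) (η a')
  map_smul : ∀ t a, η (V.bA.smul t a) = V.vB.smul t (η a)

/-- `w : M → D` is (the core-valued function underlying) the warp of the grid
`((ξ, X), (η, Y))`:  pointwise it is a core element and satisfies
`ξ(Y(m)) -_A η(X(m)) = w(m) +_B 0̃_{X(m)}` and
`ξ(Y(m)) -_B η(X(m)) = w(m) +_A 0̃_{Y(m)}`. -/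
def DVB.IsWarp {D A B M : Type*} (V : DVB D A B M)
    (s : LinSecB V) (r : LinSecA V) (w : M → D) : Prop :=
  ∀ m : M, V.CoreAt m (w m) ∧
    V.vA.sub (s.ξ (r.Y m)) (r.η (s.X m)) = V.vB.add (w m) (V.vA.zero (s.X m)) ∧
    V.vB.sub (s.ξ (r.Y m)) (r.η (s.X m)) = V.vA.add (w m) (V.vB.zero (r.Y m))

/-- The warp of the grid taken in the opposite order `((η, Y), (ξ, X))`:
`η(X(m)) -_B ξ(Y(m)) = w'(m) +_A 0̃_{Y(m)}`, etc. -/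
def DVB.IsWarpSwapped {D A B M : Type*} (V : DVB D A B M)
    (s : LinSecB V) (r : LinSecA V) (w' : M → D) : Prop :=
  ∀ m : M, V.CoreAt m (w' m) ∧
    V.vB.sub (r.η (s.X m)) (s.ξ (r.Y m)) = V.vA.add (w' m) (V.vB.zero (r.Y m)) ∧
    V.vA.sub (r.η (s.X m)) (s.ξ (r.Y m)) = V.vB.add (w' m) (V.vA.zero (s.X m))

/-! The core element is produced pointwise by `core_exists`, which is unique, so the warp is unique
too. The interchange law turns `d = e +_A (c +_B 0̃_a)` into `d = (c +_A 0̃_b) +_B e`, so the first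
warp equation implies the second. Swapping `ξ` and `η` negates `d -_A e`, and `-_A` distributes over
`c +_B 0̃_a` because scalar multiplication in one structure is linear for the other; uniqueness of
the core element then gives the sign change. -/

namespace PreVB

variable {E B : Type*} (V : PreVB E B)

theorem zero_add_of_π_eq {e : E} {b : B} (h : V.π e = b) : V.add (V.zero b) e = e :=
  h ▸ V.zero_add e

theorem eq_zero_of_add_self {e : E} (h : V.add e e = e) : e = V.zero (V.π e) := by
  calc e = V.add e (V.add e (V.neg e)) := by rw [V.add_neg, V.add_zero]
    _ = V.add (V.add e e) (V.neg e) := (V.add_assoc e e (V.neg e) rfl (V.π_neg e).symm).symm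
    _ = V.zero (V.π e) := by rw [h, V.add_neg]

theorem zero_smul (e : E) : V.smul 0 e = V.zero (V.π e) := by
  rw [← V.π_smul 0 e]
  refine V.eq_zero_of_add_self ?_
  rw [← V.add_smul, _root_.add_zero]

theorem neg_eq_of_add_eq_zero {e f : E} (hf : V.π f = V.π e) (h : V.add e f = V.zero (V.π e)) :
    V.neg e = f := by
  calc V.neg e = V.add (V.neg e) (V.add e f) := by rw [h, ← V.π_neg e, V.add_zero]
    _ = V.add (V.add e (V.neg e)) f := by
      rw [← V.add_assoc _ _ _ (V.π_neg e) hf.symm, V.add_comm _ _ (V.π_neg e)]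
    _ = f := by rw [V.add_neg, V.zero_add_of_π_eq hf]

theorem neg_eq_neg_one_smul (e : E) : V.neg e = V.smul (-1) e := by
  refine V.neg_eq_of_add_eq_zero (V.π_smul _ e) ?_
  calc V.add e (V.smul (-1) e) = V.add (V.smul 1 e) (V.smul (-1) e) := by rw [V.one_smul]
    _ = V.smul 0 e := by rw [← V.add_smul, add_neg_cancel]
    _ = V.zero (V.π e) := V.zero_smul e

theorem neg_zero (b : B) : V.neg (V.zero b) = V.zero b := by
  rw [V.neg_eq_neg_one_smul, V.smul_zero]

theorem add_neg_cancel_right {e z : E} (h : V.π e = V.π z) :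
    V.add (V.add e z) (V.neg z) = e := by
  rw [V.add_assoc e z (V.neg z) h (V.π_neg z).symm, V.add_neg, ← h, V.add_zero]

theorem sub_eq_of_eq_add' {d e z : E} (h : V.π e = V.π z) (hd : d = V.add e z) :
    V.sub d e = z := by
  rw [hd, PreVB.sub, V.add_comm e z h, V.add_neg_cancel_right h.symm]

theorem eq_add_of_sub_eq' {d e z : E} (h : V.π d = V.π e) (hz : V.sub d e = z) :
    d = V.add e z := by
  rw [← hz, PreVB.sub, V.add_comm d (V.neg e) (h.trans (V.π_neg e).symm),
    ← V.add_assoc _ _ _ (V.π_neg e).symm ((V.π_neg e).trans h.symm), V.add_neg,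
    V.zero_add_of_π_eq h]

end PreVB

namespace DVB

variable {D A B M : Type*} (V : DVB D A B M) {m : M} {a : A} {b : B} {c d e : D}

theorem CoreAt.negA (hc : V.CoreAt m c) : V.CoreAt m (V.vA.neg c) :=
  ⟨by rw [V.vA.π_neg, hc.1], by rw [V.πB_negA, hc.2, V.bB.neg_zero]⟩

theorem vA_π_addB_zeroA (hc : V.CoreAt m c) (ha : V.bA.π a = m) :
    V.vA.π (V.vB.add c (V.vA.zero a)) = a := by
  rw [V.πA_addB _ _ (by rw [hc.2, V.πB_zeroA, ha]), hc.1, V.vA.π_zero, V.bA.zero_add_of_π_eq ha]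

theorem vB_π_addA_zeroB (hc : V.CoreAt m c) (hb : V.bB.π b = m) :
    V.vB.π (V.vA.add c (V.vB.zero b)) = b := by
  rw [V.πB_addA _ _ (by rw [hc.1, V.πA_zeroB, hb]), hc.2, V.vB.π_zero, V.bB.zero_add_of_π_eq hb]

theorem negA_addB_zeroA (hc : V.CoreAt m c) (ha : V.bA.π a = m) :
    V.vA.neg (V.vB.add c (V.vA.zero a)) = V.vB.add (V.vA.neg c) (V.vA.zero a) := by
  rw [V.vA.neg_eq_neg_one_smul, V.smulA_addB _ _ _ (by rw [hc.2, V.πB_zeroA, ha]),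
    V.vA.smul_zero, ← V.vA.neg_eq_neg_one_smul]

theorem existsUnique_core_subA_eq (ha : V.bA.π a = m) (hd : V.vA.π d = a) (he : V.vA.π e = a)
    (hB : V.vB.π d = V.vB.π e) :
    ∃! c, V.CoreAt m c ∧ V.vA.sub d e = V.vB.add c (V.vA.zero a) := by
  have hcore := V.core_exists d e (hd.trans he.symm) hB
  rw [hd, ha] at hcore
  refine (existsUnique_congr fun c => and_congr_right fun hc => ?_).2 hcore
  exact ⟨V.vA.eq_add_of_sub_eq' (hd.trans he.symm),
    V.vA.sub_eq_of_eq_add' (he.trans (V.vA_π_addB_zeroA hc ha).symm)⟩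

theorem subB_eq_of_subA_eq (ha : V.bA.π a = m) (hb : V.bB.π b = m) (hd : V.vA.π d = a)
    (he : V.vA.π e = a) (heb : V.vB.π e = b) (hc : V.CoreAt m c)
    (h : V.vA.sub d e = V.vB.add c (V.vA.zero a)) :
    V.vB.sub d e = V.vA.add c (V.vB.zero b) := by
  have hint := V.interchange c (V.vB.zero b) (V.vA.zero a) e
    (by rw [hc.1, V.πA_zeroB, hb]) (by rw [V.vA.π_zero, he])
    (by rw [hc.2, V.πB_zeroA, ha]) (by rw [V.vB.π_zero, heb])
  rw [V.vA.zero_add_of_π_eq he, V.vB.zero_add_of_π_eq heb] at hint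
  refine V.vB.sub_eq_of_eq_add' (heb.trans (V.vB_π_addA_zeroB hc hb).symm) ?_
  rw [V.vA.eq_add_of_sub_eq' (hd.trans he.symm) h,
    V.vA.add_comm _ _ (he.trans (V.vA_π_addB_zeroA hc ha).symm), ← hint,
    V.vB.add_comm _ _ (by rw [V.vB_π_addA_zeroB hc hb, heb])]

theorem subA_swap_eq (ha : V.bA.π a = m) (hd : V.vA.π d = a) (he : V.vA.π e = a)
    (hc : V.CoreAt m c) (h : V.vA.sub d e = V.vB.add c (V.vA.zero a)) :
    V.vA.sub e d = V.vB.add (V.vA.neg c) (V.vA.zero a) := by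
  rw [← V.negA_addB_zeroA hc ha]
  refine V.vA.sub_eq_of_eq_add' (by rw [V.vA.π_neg, V.vA_π_addB_zeroA hc ha, hd]) ?_
  rw [V.vA.eq_add_of_sub_eq' (hd.trans he.symm) h,
    V.vA.add_neg_cancel_right (he.trans (V.vA_π_addB_zeroA hc ha).symm)]

end DVB

theorem LinSecB.vA_π_ξ_Y {D A B M : Type*} {V : DVB D A B M} (s : LinSecB V) (r : LinSecA V)
    (m : M) : V.vA.π (s.ξ (r.Y m)) = s.X m := by
  rw [s.over_base, r.secY]

theorem LinSecA.vB_π_η_X {D A B M : Type*} {V : DVB D A B M} (r : LinSecA V) (s : LinSecB V)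
    (m : M) : V.vB.π (r.η (s.X m)) = r.Y m := by
  rw [r.over_base, s.secX]

/-- A grid `((ξ, X), (η, Y))` on a double vector bundle has a
unique warp: a section of the core bundle `C → M` (a core-valued map on `M`)
satisfying the warp equations; and interchanging `ξ` and `η` changes its
sign. -/
theorem dvb_warp_exists_unique_and_antisymm {D A B M : Type*} (V : DVB D A B M)
    (s : LinSecB V) (r : LinSecA V) :
    (∃! w : M → D, V.IsWarp s r w) ∧
      (∀ w w' : M → D, V.IsWarp s r w → V.IsWarpSwapped s r w' →
        ∀ m, w' m = V.vA.neg (w m)) := by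
  have hB m : V.vB.π (s.ξ (r.Y m)) = V.vB.π (r.η (s.X m)) := by
    rw [s.proj, r.vB_π_η_X]
  have warp_at m := V.existsUnique_core_subA_eq (s.secX m) (s.vA_π_ξ_Y r m) (r.proj _) (hB m)
  have swapped_at m :=
    V.existsUnique_core_subA_eq (s.secX m) (r.proj _) (s.vA_π_ξ_Y r m) (hB m).symm
  choose w hw using fun m => (warp_at m).exists
  refine ⟨⟨w, fun m => ⟨(hw m).1, (hw m).2, ?_⟩, fun w' hw' => funext fun m =>
    (warp_at m).unique ⟨(hw' m).1, (hw' m).2.1⟩ (hw m)⟩, ?_⟩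
  · exact V.subB_eq_of_subA_eq (s.secX m) (r.secY m) (s.vA_π_ξ_Y r m) (r.proj _)
      (r.vB_π_η_X s m) (hw m).1 (hw m).2
  · intro w w' hw hw' m
    exact (swapped_at m).unique ⟨(hw' m).1, (hw' m).2.2⟩
      ⟨(hw m).1.negA, V.subA_swap_eq (s.secX m) (s.vA_π_ξ_Y r m) (r.proj _) (hw m).1 (hw m).2.1⟩
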